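/- Let D be a combinatorial link diagram with strand set S in which the two understrands of every crossing are distinct strands (D is not cut-split), suppose D is k-meridionally colorable via a sequence of coloring moves with final coloring f : S → {1,…,k}, and let h be the height function of the associated coloring sequence. Let c be a crossing with understrands s_p, s_q and overstrand s_r, and suppose f(s_p) = f(s_q). Then either (a) h(s_r) > min{h(s_p), h(s_q)}, or (b) the color class f^{-1}(f(s_p)) equals the entire connected component U of S (under adjacency) containing s_p, and c is the unique crossing whose two understrands s′_p, s′_q both lie in U and whose overstrand s′_r satisfies h(s′_r) ≤ min{h(s′_p), h(s′_q)}. -/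

import Mathlib

/-- A combinatorial link diagram: `n` strands and `n` crossings; each crossing has an
(unordered, here recorded as ordered) pair of understrands and an overstrand; every
strand occurs as an understrand of exactly two crossings, counted with multiplicity. -/
structure LinkDiagram where
  n : ℕ
  Strand : Type
  Crossing : Type
  [strandFintype : Fintype Strand]
  [strandDecEq : DecidableEq Strand]
  [crossingFintype : Fintype Crossing]
  card_strand : Fintype.card Strand = n
  card_crossing : Fintype.card Crossing = n
  under1 : Crossing → Strand
  under2 : Crossing → Strand
  overStrand : Crossing → Strand
  under_twice : ∀ s : Strand,
    Nat.card {c : Crossing // under1 c = s} + Nat.card {c : Crossing // under2 c = s} = 2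

attribute [instance] LinkDiagram.strandFintype LinkDiagram.strandDecEq
  LinkDiagram.crossingFintype

namespace LinkDiagram

/-- Two strands are adjacent if they are the two understrands of a common crossing. -/
def Adj (D : LinkDiagram) (s t : D.Strand) : Prop :=
  ∃ c : D.Crossing, (D.under1 c = s ∧ D.under2 c = t) ∨ (D.under1 c = t ∧ D.under2 c = s)

/-- A subset `B` of the strands is connected if any two of its elements are joined by a
path of adjacent strands lying within `B`. -/
def ConnectedIn (D : LinkDiagram) (B : Set D.Strand) : Prop :=
  ∀ s ∈ B, ∀ t ∈ B,
    Relation.ReflTransGen (fun a b => a ∈ B ∧ b ∈ B ∧ D.Adj a b) s t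

/-- The connected component (under adjacency) of the strand `s`. -/
def component (D : LinkDiagram) (s : D.Strand) : Set D.Strand :=
  {t | Relation.ReflTransGen D.Adj s t}

/-- A witness that `D` is `k`-meridionally colorable: `k` distinct seed strands, partial
colorings `f i` at each stage `i = 0, …, n-k` (a strand not yet colored has value `none`),
where stage `0` colors the seed `j` with color `j` and nothing else, and each stage
`i → i+1` is a coloring move assigning a color to the single new strand `newStrand i`:
it is an understrand at a crossing whose other understrand and overstrand are already
colored, and it receives the color of the other understrand.  At the final stage
`n - k`, every strand is colored. -/
structure ColoringProcess (D : LinkDiagram) (k : ℕ) where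
  seed : Fin k → D.Strand
  seed_inj : Function.Injective seed
  f : ℕ → D.Strand → Option (Fin k)
  newStrand : ℕ → D.Strand
  f0_seed : ∀ j : Fin k, f 0 (seed j) = some j
  f0_none : ∀ s : D.Strand, (∀ j : Fin k, seed j ≠ s) → f 0 s = none
  move_none : ∀ i < D.n - k, f i (newStrand i) = none
  move_eq : ∀ i < D.n - k, ∀ s : D.Strand, s ≠ newStrand i → f (i + 1) s = f i s
  move_adj : ∀ i < D.n - k, ∃ c : D.Crossing, ∃ si : D.Strand,
      ((D.under1 c = newStrand i ∧ D.under2 c = si) ∨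
        (D.under1 c = si ∧ D.under2 c = newStrand i)) ∧
      (f i si).isSome ∧ (f i (D.overStrand c)).isSome ∧
      f (i + 1) (newStrand i) = f i si
  final : ∀ s : D.Strand, (f (D.n - k) s).isSome

/-- The final coloring of a coloring process. -/
def ColoringProcess.final' {D : LinkDiagram} {k : ℕ} (p : ColoringProcess D k) :
    D.Strand → Option (Fin k) :=
  p.f (D.n - k)

/-- `h` is the height function of the coloring sequence associated to the process `p`:
the `j`-th seed (j = 1, …, k) has height `-j`, and the strand colored by the `i`-th
coloring move has height `-(k + i)`. -/
def IsHeightFunction {D : LinkDiagram} {k : ℕ} (p : ColoringProcess D k)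
    (h : D.Strand → ℤ) : Prop :=
  (∀ j : Fin k, h (p.seed j) = -((j : ℕ) + 1 : ℤ)) ∧
  (∀ i < D.n - k, h (p.newStrand i) = -((k : ℤ) + (i : ℕ) + 1))

end LinkDiagram

/-!
Suppose the overstrand of `c` is not higher than both of its understrands. The crossing used
by the move that colors a strand `s` has its overstrand and its other understrand colored
before `s`, hence higher than `s`; so `c` is used by no move. Sending every strand of the color
class `C` of `c` to the crossing of the move that colored it, and the seed of `C` to `c`, injects
`C` into the crossings with both understrands in `C`. Since every strand is an understrand
exactly twice, there are at most `#C` such crossings, with equality only if no crossing has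
exactly one understrand in `C`. So the injection is onto and `C` is closed under adjacency;
being connected through its seed, `C` is the component of `c`, and every crossing inside it
other than `c` is a move crossing, whose overstrand is higher than one of its understrands.
-/

namespace LinkDiagram

open Finset

variable {D : LinkDiagram}

instance : Std.Symm D.Adj where
  symm _ _ := fun ⟨x, hx⟩ => ⟨x, hx.symm⟩

section Counting

variable (D) (C : Finset D.Strand)

def internal : Finset D.Crossing := {x | D.under1 x ∈ C ∧ D.under2 x ∈ C}

def incident : Finset D.Crossing := {x | D.under1 x ∈ C ∨ D.under2 x ∈ C}

lemma card_under1_add_card_under2 (t : D.Strand) :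
    #{x | D.under1 x = t} + #{x | D.under2 x = t} = 2 := by
  simpa only [Nat.card_eq_fintype_card, Fintype.card_subtype] using D.under_twice t

lemma card_internal_add_card_incident : #(D.internal C) + #(D.incident C) = 2 * #C := by
  classical
  calc #(D.internal C) + #(D.incident C)
      = #{x | D.under1 x ∈ C} + #{x | D.under2 x ∈ C} := by
        rw [internal, incident, filter_and, filter_or, card_inter_add_card_union]
    _ = ∑ t ∈ C, (#{x | D.under1 x = t} + #{x | D.under2 x = t}) := by
        rw [sum_add_distrib, sum_card_fiberwise_eq_card_filter,
          sum_card_fiberwise_eq_card_filter]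
    _ = 2 * #C := by
        rw [sum_congr rfl fun t _ => D.card_under1_add_card_under2 t, sum_const, smul_eq_mul,
          mul_comm]

lemma internal_subset_incident : D.internal C ⊆ D.incident C :=
  monotone_filter_right _ fun _ _ h => Or.inl h.1

lemma card_internal_le : #(D.internal C) ≤ #C := by
  have := D.card_internal_add_card_incident C
  have := card_le_card (D.internal_subset_incident C)
  omega

variable {D C}

@[simp]
lemma mem_internal {x : D.Crossing} :
    x ∈ D.internal C ↔ D.under1 x ∈ C ∧ D.under2 x ∈ C := by
  simp [internal]

@[simp]
lemma mem_incident {x : D.Crossing} :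
    x ∈ D.incident C ↔ D.under1 x ∈ C ∨ D.under2 x ∈ C := by
  simp [incident]

lemma incident_eq_internal_of_card_le (hC : #C ≤ #(D.internal C)) :
    D.incident C = D.internal C :=
  (eq_of_subset_of_card_le (D.internal_subset_incident C)
    (by have := D.card_internal_add_card_incident C; omega)).symm

lemma component_subset_of_card_le (hC : #C ≤ #(D.internal C)) {s : D.Strand} (hs : s ∈ C) :
    D.component s ⊆ C := by
  intro t hst
  induction hst with
  | refl => exact hs
  | tail _ hadj ih =>
    obtain ⟨x, hx⟩ := hadj
    have hinc : x ∈ D.incident C := by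
      rcases hx with ⟨h1, -⟩ | ⟨-, h2⟩
      · exact mem_incident.2 (.inl (h1 ▸ ih))
      · exact mem_incident.2 (.inr (h2 ▸ ih))
    rw [incident_eq_internal_of_card_le hC, mem_internal] at hinc
    rcases hx with ⟨-, h2⟩ | ⟨h1, -⟩
    · exact h2 ▸ hinc.2
    · exact h1 ▸ hinc.1

end Counting

namespace ColoringProcess

variable {k : ℕ} (p : D.ColoringProcess k)

lemma f_succ_eq_of_isSome {i : ℕ} (hi : i < D.n - k) {s : D.Strand} (hs : (p.f i s).isSome) :
    p.f (i + 1) s = p.f i s := by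
  refine p.move_eq i hi s fun h => ?_
  rw [h, p.move_none i hi] at hs
  exact Bool.false_ne_true hs

lemma f_eq_of_le {i i' : ℕ} (hii' : i ≤ i') (hi' : i' ≤ D.n - k) {s : D.Strand}
    (hs : (p.f i s).isSome) : p.f i' s = p.f i s := by
  induction i', hii' using Nat.le_induction with
  | base => rfl
  | succ m hm ih =>
    have ih := ih (by omega)
    rw [p.f_succ_eq_of_isSome (by omega) (ih ▸ hs), ih]

lemma isSome_f_of_le {i i' : ℕ} (hii' : i ≤ i') (hi' : i' ≤ D.n - k) {s : D.Strand}
    (hs : (p.f i s).isSome) : (p.f i' s).isSome :=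
  p.f_eq_of_le hii' hi' hs ▸ hs

lemma final'_eq_f {i : ℕ} (hi : i ≤ D.n - k) {s : D.Strand} (hs : (p.f i s).isSome) :
    p.final' s = p.f i s :=
  p.f_eq_of_le hi le_rfl hs

lemma final'_seed (j : Fin k) : p.final' (p.seed j) = some j := by
  rw [p.final'_eq_f (Nat.zero_le _) (by simp [p.f0_seed j]), p.f0_seed j]

lemma isSome_f_succ_newStrand {i : ℕ} (hi : i < D.n - k) :
    (p.f (i + 1) (p.newStrand i)).isSome := by
  obtain ⟨x, s, -, hs, -, hnew⟩ := p.move_adj i hi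
  exact hnew ▸ hs

lemma not_isSome_f_newStrand_of_le {i i' : ℕ} (hii' : i ≤ i') (hi' : i' < D.n - k) :
    ¬ (p.f i (p.newStrand i')).isSome := fun hs => by
  simpa [p.move_none i' hi'] using p.isSome_f_of_le hii' hi'.le hs

lemma newStrand_injOn : Set.InjOn p.newStrand (Set.Iio (D.n - k)) := by
  intro i hi i' hi' he
  by_contra hne
  rcases Nat.lt_or_gt_of_ne hne with hlt | hlt
  · exact p.not_isSome_f_newStrand_of_le le_rfl hi'
      (he ▸ p.isSome_f_of_le hlt hi'.le (p.isSome_f_succ_newStrand hi))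
  · exact p.not_isSome_f_newStrand_of_le le_rfl hi
      (he ▸ p.isSome_f_of_le hlt hi.le (p.isSome_f_succ_newStrand hi'))

lemma seed_ne_newStrand (j : Fin k) {i : ℕ} (hi : i < D.n - k) : p.seed j ≠ p.newStrand i :=
  fun he => p.not_isSome_f_newStrand_of_le (Nat.zero_le i) hi (by simp [← he, p.f0_seed j])

lemma exists_seed_or_newStrand_of_isSome {i : ℕ} (hi : i ≤ D.n - k) {s : D.Strand}
    (hs : (p.f i s).isSome) : (∃ j, p.seed j = s) ∨ ∃ i' < i, p.newStrand i' = s := by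
  induction i with
  | zero =>
    by_contra! hno
    simp [p.f0_none s hno.1] at hs
  | succ m ih =>
    by_cases hnew : s = p.newStrand m
    · exact .inr ⟨m, m.lt_succ_self, hnew.symm⟩
    · rw [p.move_eq m hi s hnew] at hs
      exact (ih (by omega) hs).imp_right fun ⟨i', hi', he⟩ => ⟨i', by omega, he⟩

lemma exists_seed_or_newStrand (s : D.Strand) :
    (∃ j, p.seed j = s) ∨ ∃ i < D.n - k, p.newStrand i = s :=
  p.exists_seed_or_newStrand_of_isSome le_rfl (p.final s)

lemma height_newStrand_lt {h : D.Strand → ℤ} (hh : IsHeightFunction p h) {i : ℕ}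
    (hi : i < D.n - k) {s : D.Strand} (hs : (p.f i s).isSome) : h (p.newStrand i) < h s := by
  rw [hh.2 i hi]
  rcases p.exists_seed_or_newStrand_of_isSome hi.le hs with ⟨j, rfl⟩ | ⟨i', hi', rfl⟩
  · rw [hh.1 j]
    omega
  · rw [hh.2 i' (by omega)]
    omega

lemma seed_reflTransGen_of_f_eq {i : ℕ} (hi : i ≤ D.n - k) {s : D.Strand} {j : Fin k}
    (hs : p.f i s = some j) : Relation.ReflTransGen D.Adj (p.seed j) s := by
  induction i generalizing s with
  | zero =>
    rcases p.exists_seed_or_newStrand_of_isSome hi (Option.isSome_of_eq_some hs) with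
      ⟨j', rfl⟩ | ⟨_, h, -⟩
    · obtain rfl : j' = j := by simpa [p.f0_seed j'] using hs
      exact .refl
    · exact absurd h (Nat.not_lt_zero _)
  | succ m ih =>
    by_cases hnew : s = p.newStrand m
    · subst hnew
      obtain ⟨x, t, hu, -, -, heq⟩ := p.move_adj m hi
      exact (ih (by omega) (heq ▸ hs)).tail ⟨x, hu.symm⟩
    · exact ih (by omega) (p.move_eq m hi s hnew ▸ hs)

lemma mem_component_of_final'_eq {s t : D.Strand} (hst : p.final' t = p.final' s) :
    t ∈ D.component s := by
  obtain ⟨j, hj⟩ := Option.isSome_iff_exists.1 (p.final s)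
  exact (Std.Symm.symm _ _ (p.seed_reflTransGen_of_f_eq le_rfl hj)).trans
    (p.seed_reflTransGen_of_f_eq le_rfl (hst.trans hj))

def colorClass (τ : Option (Fin k)) : Finset D.Strand := {s | p.final' s = τ}

@[simp]
lemma mem_colorClass {τ : Option (Fin k)} {s : D.Strand} :
    s ∈ p.colorClass τ ↔ p.final' s = τ := by
  simp [colorClass]

lemma coe_colorClass (τ : Option (Fin k)) :
    (p.colorClass τ : Set D.Strand) = {s | p.final' s = τ} :=
  Set.ext fun _ => p.mem_colorClass

def IsMove (i : ℕ) (x : D.Crossing) (s : D.Strand) : Prop :=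
  ((D.under1 x = p.newStrand i ∧ D.under2 x = s) ∨
    (D.under1 x = s ∧ D.under2 x = p.newStrand i)) ∧
  (p.f i s).isSome ∧ (p.f i (D.overStrand x)).isSome ∧ p.f (i + 1) (p.newStrand i) = p.f i s

namespace IsMove

variable {p} {i : ℕ} {x : D.Crossing} {s : D.Strand}

lemma min_height_lt_overStrand (hm : p.IsMove i x s) (hi : i < D.n - k)
    {h : D.Strand → ℤ} (hh : IsHeightFunction p h) :
    min (h (D.under1 x)) (h (D.under2 x)) < h (D.overStrand x) := by
  obtain ⟨hu, hs, hover, -⟩ := hm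
  have h1 := p.height_newStrand_lt hh hi hover
  have h2 := p.height_newStrand_lt hh hi hs
  rcases hu with ⟨e1, e2⟩ | ⟨e1, e2⟩ <;> rw [e1, e2] <;> omega

lemma isSome_f_under (hm : p.IsMove i x s) {i' : ℕ} (hii' : i < i') (hi' : i' ≤ D.n - k) :
    (p.f i' (D.under1 x)).isSome ∧ (p.f i' (D.under2 x)).isSome := by
  have hnew := p.isSome_f_of_le hii' hi' (p.isSome_f_succ_newStrand (by omega))
  have hs := p.isSome_f_of_le hii'.le hi' hm.2.1
  rcases hm.1 with ⟨e1, e2⟩ | ⟨e1, e2⟩ <;> rw [e1, e2] <;> exact ⟨‹_›, ‹_›⟩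

lemma not_lt_of_isMove (hm : p.IsMove i x s) {i' : ℕ} {s' : D.Strand} (hm' : p.IsMove i' x s')
    (hi' : i' < D.n - k) : ¬ i < i' := fun hii' => by
  have hunder := hm.isSome_f_under hii' hi'.le
  rcases hm'.1 with ⟨e1, -⟩ | ⟨-, e2⟩
  · exact p.not_isSome_f_newStrand_of_le le_rfl hi' (e1 ▸ hunder.1)
  · exact p.not_isSome_f_newStrand_of_le le_rfl hi' (e2 ▸ hunder.2)

lemma index_eq (hm : p.IsMove i x s) {i' : ℕ} {s' : D.Strand} (hm' : p.IsMove i' x s')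
    (hi : i < D.n - k) (hi' : i' < D.n - k) : i = i' :=
  le_antisymm (not_lt.1 (hm'.not_lt_of_isMove hm hi)) (not_lt.1 (hm.not_lt_of_isMove hm' hi'))

lemma final'_eq (hm : p.IsMove i x s) (hi : i < D.n - k) :
    p.final' s = p.final' (p.newStrand i) := by
  rw [p.final'_eq_f hi.le hm.2.1, p.final'_eq_f hi (p.isSome_f_succ_newStrand hi), hm.2.2.2]

lemma mem_internal (hm : p.IsMove i x s) {C : Finset D.Strand} (hnew : p.newStrand i ∈ C)
    (hs : s ∈ C) : x ∈ D.internal C := by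
  rcases hm.1 with ⟨e1, e2⟩ | ⟨e1, e2⟩ <;> simp [e1, e2, hnew, hs]

end IsMove

variable (x : D.Crossing)

noncomputable def moveCrossing (i : ℕ) : D.Crossing :=
  if hi : i < D.n - k then (p.move_adj i hi).choose else x

lemma exists_isMove_moveCrossing {i : ℕ} (hi : i < D.n - k) :
    ∃ s, p.IsMove i (p.moveCrossing x i) s := by
  rw [moveCrossing, dif_pos hi]
  exact (p.move_adj i hi).choose_spec

noncomputable def colorCrossing (t : D.Strand) : D.Crossing :=
  if ht : ∃ i < D.n - k, p.newStrand i = t then p.moveCrossing x ht.choose else x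

lemma colorCrossing_newStrand {i : ℕ} (hi : i < D.n - k) :
    p.colorCrossing x (p.newStrand i) = p.moveCrossing x i := by
  have ht : ∃ i' < D.n - k, p.newStrand i' = p.newStrand i := ⟨i, hi, rfl⟩
  rw [colorCrossing, dif_pos ht, p.newStrand_injOn ht.choose_spec.1 hi ht.choose_spec.2]

lemma colorCrossing_seed (j : Fin k) : p.colorCrossing x (p.seed j) = x :=
  dif_neg fun ⟨_, hi, he⟩ => p.seed_ne_newStrand j hi he.symm

lemma mapsTo_colorCrossing (hcol : p.final' (D.under1 x) = p.final' (D.under2 x)) :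
    Set.MapsTo (p.colorCrossing x) (p.colorClass (p.final' (D.under1 x)))
      (D.internal (p.colorClass (p.final' (D.under1 x)))) := by
  intro t ht
  rcases p.exists_seed_or_newStrand t with ⟨j, rfl⟩ | ⟨i, hi, rfl⟩
  · rw [p.colorCrossing_seed]
    simp [hcol]
  · obtain ⟨s, hm⟩ := p.exists_isMove_moveCrossing x hi
    rw [p.colorCrossing_newStrand x hi]
    exact hm.mem_internal ht (p.mem_colorClass.2 ((hm.final'_eq hi).trans (p.mem_colorClass.1 ht)))

variable {h : D.Strand → ℤ} (hh : IsHeightFunction p h)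
include hh

lemma min_height_lt_overStrand_moveCrossing {i : ℕ} (hi : i < D.n - k) :
    min (h (D.under1 (p.moveCrossing x i))) (h (D.under2 (p.moveCrossing x i))) <
      h (D.overStrand (p.moveCrossing x i)) :=
  let ⟨_, hm⟩ := p.exists_isMove_moveCrossing x hi
  hm.min_height_lt_overStrand hi hh

lemma colorCrossing_eq_or_min_height_lt_overStrand (t : D.Strand) :
    p.colorCrossing x t = x ∨ min (h (D.under1 (p.colorCrossing x t)))
      (h (D.under2 (p.colorCrossing x t))) < h (D.overStrand (p.colorCrossing x t)) := by
  rcases p.exists_seed_or_newStrand t with ⟨j, rfl⟩ | ⟨i, hi, rfl⟩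
  · exact .inl (p.colorCrossing_seed x j)
  · exact .inr (p.colorCrossing_newStrand x hi ▸ p.min_height_lt_overStrand_moveCrossing x hh hi)

lemma injOn_colorCrossing (hx : h (D.overStrand x) ≤ min (h (D.under1 x)) (h (D.under2 x)))
    (τ : Option (Fin k)) : Set.InjOn (p.colorCrossing x) (p.colorClass τ) := by
  have hne : ∀ i < D.n - k, p.moveCrossing x i ≠ x := fun i hi he =>
    (he ▸ p.min_height_lt_overStrand_moveCrossing x hh hi).not_ge hx
  intro t ht t' ht' he
  have hcolor : p.final' t = p.final' t' :=
    (p.mem_colorClass.1 ht).trans (p.mem_colorClass.1 ht').symm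
  rcases p.exists_seed_or_newStrand t with ⟨j, rfl⟩ | ⟨i, hi, rfl⟩ <;>
    rcases p.exists_seed_or_newStrand t' with ⟨j', rfl⟩ | ⟨i', hi', rfl⟩
  · rw [p.final'_seed, p.final'_seed, Option.some_inj] at hcolor
    rw [hcolor]
  · exact absurd (he.symm.trans (p.colorCrossing_seed x j))
      (p.colorCrossing_newStrand x hi' ▸ hne i' hi')
  · exact absurd (he.trans (p.colorCrossing_seed x j'))
      (p.colorCrossing_newStrand x hi ▸ hne i hi)
  · rw [p.colorCrossing_newStrand x hi, p.colorCrossing_newStrand x hi'] at he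
    obtain ⟨_, hm⟩ := p.exists_isMove_moveCrossing x hi
    obtain ⟨_, hm'⟩ := p.exists_isMove_moveCrossing x hi'
    rw [hm.index_eq (he ▸ hm') hi hi']

lemma image_colorCrossing_colorClass [DecidableEq D.Crossing]
    (hx : h (D.overStrand x) ≤ min (h (D.under1 x)) (h (D.under2 x)))
    (hcol : p.final' (D.under1 x) = p.final' (D.under2 x)) :
    (p.colorClass (p.final' (D.under1 x))).image (p.colorCrossing x) =
      D.internal (p.colorClass (p.final' (D.under1 x))) :=
  eq_of_subset_of_card_le (image_subset_iff.2 (p.mapsTo_colorCrossing x hcol))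
    ((card_image_of_injOn (p.injOn_colorCrossing x hh hx _)).symm ▸ D.card_internal_le _)

lemma component_eq_colorClass
    (hx : h (D.overStrand x) ≤ min (h (D.under1 x)) (h (D.under2 x)))
    (hcol : p.final' (D.under1 x) = p.final' (D.under2 x)) :
    D.component (D.under1 x) = p.colorClass (p.final' (D.under1 x)) := by
  classical
  have hcard := card_image_of_injOn (p.injOn_colorCrossing x hh hx (p.final' (D.under1 x)))
  rw [p.image_colorCrossing_colorClass x hh hx hcol] at hcard
  exact (component_subset_of_card_le hcard.ge (p.mem_colorClass.2 rfl)).antisymm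
    fun t ht => p.mem_component_of_final'_eq (p.mem_colorClass.1 ht)

end ColoringProcess

end LinkDiagram

theorem wirtinger_link_overstrand_height_general (D : LinkDiagram)
    (k : ℕ) (p : LinkDiagram.ColoringProcess D k)
    (h : D.Strand → ℤ) (hh : LinkDiagram.IsHeightFunction p h)
    (c : D.Crossing)
    (hcol : p.final' (D.under1 c) = p.final' (D.under2 c)) :
    min (h (D.under1 c)) (h (D.under2 c)) < h (D.overStrand c) ∨
    ({s : D.Strand | p.final' s = p.final' (D.under1 c)} = D.component (D.under1 c) ∧
      ∀ c' : D.Crossing,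
        D.under1 c' ∈ D.component (D.under1 c) →
        D.under2 c' ∈ D.component (D.under1 c) →
        h (D.overStrand c') ≤ min (h (D.under1 c')) (h (D.under2 c')) →
        c' = c) := by
  rcases lt_or_ge (min (h (D.under1 c)) (h (D.under2 c))) (h (D.overStrand c)) with hc | hc
  · exact .inl hc
  classical
  have hcomp := p.component_eq_colorClass c hh hc hcol
  refine .inr ⟨by rw [hcomp, p.coe_colorClass], ?_⟩
  intro c' h1 h2 hle
  rw [hcomp] at h1 h2
  have hc' : c' ∈ D.internal (p.colorClass (p.final' (D.under1 c))) :=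
    LinkDiagram.mem_internal.2 ⟨h1, h2⟩
  rw [← p.image_colorCrossing_colorClass c hh hc hcol] at hc'
  obtain ⟨t, -, rfl⟩ := Finset.mem_image.1 hc'
  exact (p.colorCrossing_eq_or_min_height_lt_overStrand c hh t).resolve_right hle.not_gt

/-- Let `D` be a link diagram with distinct understrands at every
crossing (i.e. not cut-split), `k`-meridionally colorable, with final coloring
`p.final'` and height function `h`.  If the two understrands of a crossing `c` get
the same final color, then either (a) the overstrand's height exceeds the minimum of
the understrands' heights, or (b) the color class of the understrands equals the whole
connected component `U` containing them, and `c` is the unique crossing with both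
understrands in `U` whose overstrand's height is at most the minimum of its
understrands' heights. -/
theorem wirtinger_link_overstrand_height (D : LinkDiagram)
    (hdist : ∀ c : D.Crossing, D.under1 c ≠ D.under2 c)
    (k : ℕ) (p : LinkDiagram.ColoringProcess D k)
    (h : D.Strand → ℤ) (hh : LinkDiagram.IsHeightFunction p h)
    (c : D.Crossing)
    (hcol : p.final' (D.under1 c) = p.final' (D.under2 c)) :
    min (h (D.under1 c)) (h (D.under2 c)) < h (D.overStrand c) ∨
    ({s : D.Strand | p.final' s = p.final' (D.under1 c)} = D.component (D.under1 c) ∧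
      ∀ c' : D.Crossing,
        D.under1 c' ∈ D.component (D.under1 c) →
        D.under2 c' ∈ D.component (D.under1 c) →
        h (D.overStrand c') ≤ min (h (D.under1 c')) (h (D.under2 c')) →
        c' = c) :=
  wirtinger_link_overstrand_height_general D k p h hh c hcol
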